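/- Define the D-GMSR conjunction key function h∧(y) := (M_{0,w}^ε(|y|_+^2))^{1/2} − (M_{p,w}^ε(|y|_-^2))^{1/2}. Then h∧(y) > 0 if and only if min_i y_i > 0, i.e., all components of y are strictly positive. -/

import Mathlib

open Finset Real Filter Topology

noncomputable def M0 {n : ℕ} (ε : ℝ) (w : Fin n → ℕ) (z : Fin n → ℝ) : ℝ :=
  (ε ^ (∑ i, w i) + ∏ i, z i ^ w i) ^ ((1 : ℝ) / (∑ i, w i))

noncomputable def Mp {n : ℕ} (ε : ℝ) (p : ℕ) (w : Fin n → ℕ) (z : Fin n → ℝ) : ℝ :=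
  (ε ^ p + (1 / (∑ i, (w i : ℝ))) * ∑ i, (w i : ℝ) * z i ^ p) ^ ((1 : ℝ) / p)

noncomputable def posSq {n : ℕ} (y : Fin n → ℝ) : Fin n → ℝ := fun i => max (y i) 0 ^ 2

noncomputable def negSq {n : ℕ} (y : Fin n → ℝ) : Fin n → ℝ := fun i => min (y i) 0 ^ 2

noncomputable def hConj {n : ℕ} (ε : ℝ) (p : ℕ) (w : Fin n → ℕ) (y : Fin n → ℝ) : ℝ :=
  M0 ε w (posSq y) ^ ((1 : ℝ) / 2) - Mp ε p w (negSq y) ^ ((1 : ℝ) / 2)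

noncomputable def hDisj {n : ℕ} (ε : ℝ) (p : ℕ) (w : Fin n → ℕ) (y : Fin n → ℝ) : ℝ :=
  - hConj ε p w (fun i => - y i)

/-! Since `ε > 0`, both means are at least `ε`. If some `y j ≤ 0`, the product in the geometric
mean vanishes, so `M₀ = ε ≤ Mₚ` and `h∧(y) ≤ 0`. If all `y i > 0`, the negative parts vanish, so
`Mₚ = ε`, while the product is positive, so `M₀ > ε` and `h∧(y) > 0`. -/

lemma pow_rpow_one_div_natCast {a : ℝ} (ha : 0 ≤ a) {m : ℕ} (hm : m ≠ 0) :
    (a ^ m) ^ ((1 : ℝ) / m) = a := by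
  rw [one_div, Real.pow_rpow_inv_natCast ha hm]

section Means

variable {n : ℕ} {ε : ℝ} {w : Fin n → ℕ} {z : Fin n → ℝ}

lemma M0_eq_of_apply_eq_zero (hε : 0 ≤ ε) {j : Fin n} (hj : z j = 0) (hwj : w j ≠ 0) :
    M0 ε w z = ε := by
  have hprod : ∏ i, z i ^ w i = 0 :=
    prod_eq_zero (mem_univ j) (by rw [hj, zero_pow hwj])
  have hS : ∑ i, w i ≠ 0 := fun h => hwj (sum_eq_zero_iff.mp h j (mem_univ j))
  rw [M0, hprod, add_zero, pow_rpow_one_div_natCast hε hS]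

lemma lt_M0_of_forall_pos (hε : 0 ≤ ε) (hS : ∑ i, w i ≠ 0) (hz : ∀ i, 0 < z i) :
    ε < M0 ε w z := by
  have hprod : 0 < ∏ i, z i ^ w i := prod_pos fun i _ => pow_pos (hz i) _
  calc ε = (ε ^ ∑ i, w i) ^ ((1 : ℝ) / ∑ i, w i) := (pow_rpow_one_div_natCast hε hS).symm
    _ < M0 ε w z := Real.rpow_lt_rpow (by positivity) (lt_add_of_pos_right _ hprod)
        (by simp only [one_div, inv_pos, Nat.cast_pos]; omega)

variable {p : ℕ}

lemma le_Mp (hε : 0 ≤ ε) (hp : p ≠ 0) (hz : ∀ i, 0 ≤ z i) : ε ≤ Mp ε p w z := by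
  have hsum : 0 ≤ (1 / ∑ i, (w i : ℝ)) * ∑ i, (w i : ℝ) * z i ^ p :=
    mul_nonneg (by positivity) (sum_nonneg fun i _ => mul_nonneg (by positivity)
      (pow_nonneg (hz i) p))
  calc ε = (ε ^ p) ^ ((1 : ℝ) / p) := (pow_rpow_one_div_natCast hε hp).symm
    _ ≤ Mp ε p w z := Real.rpow_le_rpow (by positivity) (le_add_of_nonneg_right hsum)
        (by positivity)

lemma Mp_zero (hε : 0 ≤ ε) (hp : p ≠ 0) : Mp ε p w 0 = ε := by
  simp only [Mp, Pi.zero_apply, zero_pow hp, mul_zero, sum_const_zero, add_zero]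
  exact pow_rpow_one_div_natCast hε hp

end Means

section Parts

variable {n : ℕ} {y : Fin n → ℝ}

lemma posSq_apply_eq_zero {j : Fin n} (hj : y j ≤ 0) : posSq y j = 0 := by
  simp [posSq, max_eq_right hj]

lemma posSq_apply_pos {i : Fin n} (hi : 0 < y i) : 0 < posSq y i := by
  simp only [posSq, max_eq_left hi.le]
  positivity

lemma negSq_apply_nonneg (i : Fin n) : 0 ≤ negSq y i := sq_nonneg _

lemma negSq_eq_zero (hy : ∀ i, 0 ≤ y i) : negSq y = 0 := by
  funext i
  simp [negSq, min_eq_right (hy i)]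

end Parts

section Conj

variable {n : ℕ} {ε : ℝ} {p : ℕ} {w : Fin n → ℕ} {y : Fin n → ℝ}

lemma hConj_nonpos_of_apply_nonpos (hε : 0 ≤ ε) (hp : p ≠ 0) {j : Fin n} (hj : y j ≤ 0)
    (hwj : w j ≠ 0) : hConj ε p w y ≤ 0 := by
  rw [hConj, M0_eq_of_apply_eq_zero hε (posSq_apply_eq_zero hj) hwj, sub_nonpos]
  exact Real.rpow_le_rpow hε (le_Mp hε hp negSq_apply_nonneg) (by norm_num)

lemma hConj_pos_of_forall_pos (hε : 0 ≤ ε) (hp : p ≠ 0) (hS : ∑ i, w i ≠ 0)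
    (hy : ∀ i, 0 < y i) : 0 < hConj ε p w y := by
  rw [hConj, negSq_eq_zero fun i => (hy i).le, Mp_zero hε hp, sub_pos]
  exact Real.rpow_lt_rpow hε (lt_M0_of_forall_pos hε hS fun i => posSq_apply_pos (hy i))
    (by norm_num)

end Conj

theorem hConj_pos_iff_min_pos {n : ℕ} (hn : 0 < n) (ε : ℝ) (hε : 0 < ε)
    (p : ℕ) (hp : 0 < p) (w : Fin n → ℕ) (hw : ∀ i, 0 < w i) (y : Fin n → ℝ) :
    0 < hConj ε p w y ↔
      0 < Finset.univ.inf' (Finset.univ_nonempty_iff.mpr ⟨⟨0, hn⟩⟩) y := by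
  simp only [lt_inf'_iff, mem_univ, true_implies]
  refine ⟨fun h => ?_, hConj_pos_of_forall_pos hε.le hp.ne' ?_⟩
  · by_contra! hy
    obtain ⟨j, hj⟩ := hy
    exact h.not_ge (hConj_nonpos_of_apply_nonpos hε.le hp.ne' hj (hw j).ne')
  · exact (sum_pos (fun i _ => hw i) ⟨⟨0, hn⟩, mem_univ _⟩).ne'
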